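/- Let k be an algebraically closed field of characteristic 0, ζ ∈ k a primitive 3rd root of unity, and b ∈ k a nonzero scalar. Let the 3×3 braiding matrix be q_{11} = −1, q_{12} = b, q_{13} = −b⁻³, q_{21} = ζ²b⁻¹, q_{22} = ζ, q_{23} = ζb, q_{31} = −b³, q_{32} = b⁻¹, q_{33} = −1 (type 𝔤(2,3), first Weyl-groupoid object). Then for every λ ∈ k, the quotient of the free algebra k⟨y_1,y_2,y_3⟩ by the two-sided ideal generated by y_{13}, y_{221}, y_1², y_3², [y_{223}, y_{23}]_c, and [[y_{(13)}, y_2]_c, y_2]_c − λ is a nontrivial algebra. -/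

import Mathlib

/-- The `q`-bilinear form `q(α,β) = ∏ i j, (q i j) ^ (α i * β j)` on `ℕⁿ`-degrees. -/
noncomputable def qForm {k : Type*} [Field k] {n : ℕ} (q : Fin n → Fin n → k)
    (α β : Fin n → ℕ) : k :=
  ∏ i : Fin n, ∏ j : Fin n, q i j ^ (α i * β j)

/-- The braided commutator on pairs (homogeneous element, its `ℕⁿ`-degree):
`[u,v]_c = u v − q(deg u, deg v) v u`. -/
noncomputable def bc {k : Type*} [Field k] {n : ℕ} (q : Fin n → Fin n → k)
    (u v : FreeAlgebra k (Fin n) × (Fin n → ℕ)) :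
    FreeAlgebra k (Fin n) × (Fin n → ℕ) :=
  (u.1 * v.1 - qForm q u.2 v.2 • (v.1 * u.1), fun i => u.2 i + v.2 i)

/-- The generator `y i` of the free algebra, together with its degree `e_i`. -/
noncomputable def ygen (k : Type*) [Field k] {n : ℕ} (i : Fin n) :
    FreeAlgebra k (Fin n) × (Fin n → ℕ) :=
  (FreeAlgebra.ι k i, fun j => if j = i then 1 else 0)

/-!
The quotient is nontrivial as soon as it has a nonzero representation. On `k⁴` let `y₂` act by
`diag(1, b, ζb, ζb²)` and `y₁`, `y₃` by square-zero matrices, the latter scaled by a parameter `c`.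
Then `y₂₃` is supported on two positions whose mutual products vanish, which kills
`[y₂₂₃, y₂₃]_c`; `y₁₃` and `y₂₂₁` vanish by computation (using `ζ³ = 1`); and bracketing `y₍₁₃₎`
twice with the diagonal `y₂` gives the scalar `(1 - ζ)²(1 - ζ²)b⁴c`, which is nonzero for `c ≠ 0`
since `ζ` is a primitive cube root of unity, so a suitable `c` makes it `λ`.
-/

section BraidedCommutator

variable {k : Type*} [Field k] {n : ℕ} (q : Fin n → Fin n → k)

theorem qForm_add_left (α β γ : Fin n → ℕ) :
    qForm q (α + β) γ = qForm q α γ * qForm q β γ := by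
  simp only [qForm, Pi.add_apply, add_mul, pow_add, Finset.prod_mul_distrib]

theorem qForm_add_right (α β γ : Fin n → ℕ) :
    qForm q α (β + γ) = qForm q α β * qForm q α γ := by
  simp only [qForm, Pi.add_apply, mul_add, pow_add, Finset.prod_mul_distrib]

theorem qForm_ygen_ygen (i j : Fin n) : qForm q (ygen k i).2 (ygen k j).2 = q i j := by
  simp [qForm, ygen, Finset.prod_ite_eq']

theorem bc_snd (u v : FreeAlgebra k (Fin n) × (Fin n → ℕ)) : (bc q u v).2 = u.2 + v.2 := rfl

variable {A : Type*} [Ring A] [Algebra k A] (M : Fin n → A)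

theorem lift_ygen_fst (i : Fin n) : FreeAlgebra.lift k M (ygen k i).1 = M i :=
  FreeAlgebra.lift_ι_apply M i

theorem lift_bc_fst (u v : FreeAlgebra k (Fin n) × (Fin n → ℕ)) :
    FreeAlgebra.lift k M (bc q u v).1 = FreeAlgebra.lift k M u.1 * FreeAlgebra.lift k M v.1 -
      qForm q u.2 v.2 • (FreeAlgebra.lift k M v.1 * FreeAlgebra.lift k M u.1) := by
  simp only [bc, map_sub, map_mul, map_smul]

end BraidedCommutator

theorem TwoSidedIdeal.one_notMem_span_of_map_eq_zero {R S F : Type*} [Ring R] [Ring S]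
    [Nontrivial S] [FunLike F R S] [RingHomClass F R S] (f : F) {s : Set R}
    (hs : ∀ x ∈ s, f x = 0) : (1 : R) ∉ TwoSidedIdeal.span s := fun h => by
  have hker : TwoSidedIdeal.span s ≤ TwoSidedIdeal.ker f :=
    TwoSidedIdeal.span_le.mpr fun x hx => (TwoSidedIdeal.mem_ker f).mpr (hs x hx)
  simpa using (TwoSidedIdeal.mem_ker f).mp (hker h)

section G23Representation

variable {k : Type*} [Field k] (ζ b c : k)

def g23Braiding : Fin 3 → Fin 3 → k :=
  ![![-1, b, -(b ^ 3)⁻¹], ![ζ ^ 2 * b⁻¹, ζ, ζ * b], ![-b ^ 3, b⁻¹, -1]]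

def g23Rep : Fin 3 → Matrix (Fin 4) (Fin 4) k :=
  ![!![0, 1, 1, 0; 0, 0, 0, -1; 0, 0, 0, 1; 0, 0, 0, 0],
    !![1, 0, 0, 0; 0, b, 0, 0; 0, 0, ζ * b, 0; 0, 0, 0, ζ * b ^ 2],
    !![0, 0, 0, 0; b ^ 3 * c, 0, 0, 0; -(b ^ 3 * c), 0, 0, 0; 0, c, c, 0]]

local notation "ρ" => FreeAlgebra.lift k (g23Rep ζ b c)
local notation "Q" => g23Braiding ζ b
local notation "y" => ygen k

-- Lemma names follow the paper's 1-based indices: `y 0`, `y 1`, `y 2` are `y₁`, `y₂`, `y₃`.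

theorem g23Rep_y1_sq : ρ (FreeAlgebra.ι k 0 ^ 2) = 0 := by
  rw [map_pow, FreeAlgebra.lift_ι_apply]
  ext i j
  fin_cases i <;> fin_cases j <;> simp [g23Rep, pow_two]

theorem g23Rep_y3_sq : ρ (FreeAlgebra.ι k 2 ^ 2) = 0 := by
  rw [map_pow, FreeAlgebra.lift_ι_apply]
  ext i j
  fin_cases i <;> fin_cases j <;> simp [g23Rep, pow_two]

theorem g23Rep_y13 (hb : b ≠ 0) : ρ (bc Q (y 0) (y 2)).1 = 0 := by
  simp only [lift_bc_fst, lift_ygen_fst, qForm_ygen_ygen]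
  ext i j
  fin_cases i <;> fin_cases j <;> simp [g23Rep, g23Braiding, hb]

theorem g23Rep_y221 (hb : b ≠ 0) (hζ : ζ ^ 3 = 1) : ρ (bc Q (y 1) (bc Q (y 1) (y 0))).1 = 0 := by
  simp only [lift_bc_fst, lift_ygen_fst, bc_snd, qForm_add_right, qForm_ygen_ygen]
  ext i j
  fin_cases i <;> fin_cases j <;> simp [g23Rep, g23Braiding] <;> field_simp <;> grind

theorem g23Rep_y23 :
    ρ (bc Q (y 1) (y 2)).1 =
      !![0, 0, 0, 0; (1 - ζ) * b ^ 4 * c, 0, 0, 0; 0, 0, 0, 0; 0, 0, (1 - ζ) * ζ * b ^ 2 * c, 0] := by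
  simp only [lift_bc_fst, lift_ygen_fst, qForm_ygen_ygen]
  ext i j
  fin_cases i <;> fin_cases j <;> simp [g23Rep, g23Braiding] <;> ring

theorem g23Rep_bc_y223_y23 :
    ρ (bc Q (bc Q (y 1) (bc Q (y 1) (y 2))) (bc Q (y 1) (y 2))).1 = 0 := by
  simp only [lift_bc_fst, ↓g23Rep_y23, lift_ygen_fst]
  ext i j
  fin_cases i <;> fin_cases j <;> simp [g23Rep]

theorem g23Rep_bc_y1_y23 (hb : b ≠ 0) :
    ρ (bc Q (y 0) (bc Q (y 1) (y 2))).1 =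
      !![(1 - ζ) * b ^ 4 * c, 0, 0, 0; 0, (1 - ζ) * b ^ 2 * c, (1 - ζ) ^ 2 * b ^ 2 * c, 0;
        0, 0, (1 - ζ) * ζ * b ^ 2 * c, 0; 0, 0, 0, (1 - ζ) * ζ * c] := by
  rw [lift_bc_fst, g23Rep_y23, lift_ygen_fst]
  simp only [bc_snd, qForm_add_right, qForm_ygen_ygen]
  ext i j
  fin_cases i <;> fin_cases j <;> simp [g23Rep, g23Braiding] <;> field_simp <;> ring

theorem g23Rep_bc_bc_y1_y23_y2 (hb : b ≠ 0) :
    ρ (bc Q (bc Q (y 0) (bc Q (y 1) (y 2))) (y 1)).1 =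
      !![(1 - ζ) ^ 2 * b ^ 4 * c, 0, 0, 0; 0, (1 - ζ) ^ 2 * b ^ 3 * c, 0, 0;
        0, 0, (1 - ζ) ^ 2 * ζ ^ 2 * b ^ 3 * c, 0; 0, 0, 0, (1 - ζ) ^ 2 * ζ ^ 2 * b ^ 2 * c] := by
  rw [lift_bc_fst, g23Rep_bc_y1_y23 ζ b c hb, lift_ygen_fst]
  simp only [bc_snd, qForm_add_left, qForm_ygen_ygen]
  ext i j
  fin_cases i <;> fin_cases j <;> simp [g23Rep, g23Braiding] <;> field_simp <;> ring

theorem g23Rep_bc_bc_bc_y1_y23_y2_y2 (hb : b ≠ 0) (hζ : ζ ^ 3 = 1) :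
    ρ (bc Q (bc Q (bc Q (y 0) (bc Q (y 1) (y 2))) (y 1)) (y 1)).1 =
      algebraMap k _ ((1 - ζ) ^ 2 * (1 - ζ ^ 2) * b ^ 4 * c) := by
  rw [lift_bc_fst, g23Rep_bc_bc_y1_y23_y2 ζ b c hb, lift_ygen_fst]
  simp only [bc_snd, qForm_add_left, qForm_ygen_ygen]
  ext i j
  fin_cases i <;> fin_cases j <;> simp [g23Rep, g23Braiding, Matrix.algebraMap_eq_diagonal] <;> grind

end G23Representation

theorem statement_18_general {k : Type*} [Field k]
    (ζ : k) (hζ : IsPrimitiveRoot ζ 3) (b : k) (hb : b ≠ 0)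
    (lam : k)
    (q : Fin 3 → Fin 3 → k) (hq : q = ![![-1, b, -(b ^ 3)⁻¹], ![ζ ^ 2 * b⁻¹, ζ, ζ * b], ![-b ^ 3, b⁻¹, -1]]) :
    (1 : FreeAlgebra k (Fin 3)) ∉ TwoSidedIdeal.span
      ({(bc q (ygen k 0) (ygen k 2)).1,
        (bc q (ygen k 1) (bc q (ygen k 1) (ygen k 0))).1,
        FreeAlgebra.ι k (0 : Fin 3) ^ 2,
        FreeAlgebra.ι k (2 : Fin 3) ^ 2,
        (bc q (bc q (ygen k 1) (bc q (ygen k 1) (ygen k 2))) (bc q (ygen k 1) (ygen k 2))).1,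
        (bc q (bc q (bc q (ygen k 0) (bc q (ygen k 1) (ygen k 2))) (ygen k 1)) (ygen k 1)).1 - algebraMap k (FreeAlgebra k (Fin 3)) lam} : Set (FreeAlgebra k (Fin 3))) := by
  obtain rfl : q = g23Braiding ζ b := hq
  have hζ3 : ζ ^ 3 = 1 := hζ.pow_eq_one
  have hscalar : (1 - ζ) ^ 2 * (1 - ζ ^ 2) * b ^ 4 ≠ 0 := by
    have hζ1 : ζ ≠ 1 := hζ.ne_one (by norm_num)
    have hζ2 : ζ ^ 2 ≠ 1 := hζ.pow_ne_one_of_pos_of_lt (by norm_num) (by norm_num)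
    simp [sub_eq_zero, hζ1.symm, hζ2.symm, hb]
  set c := lam / ((1 - ζ) ^ 2 * (1 - ζ ^ 2) * b ^ 4)
  have hlam : (1 - ζ) ^ 2 * (1 - ζ ^ 2) * b ^ 4 * c = lam := mul_div_cancel₀ lam hscalar
  refine TwoSidedIdeal.one_notMem_span_of_map_eq_zero (FreeAlgebra.lift k (g23Rep ζ b c)) ?_
  simp only [Set.mem_insert_iff, Set.mem_singleton_iff, forall_eq_or_imp, forall_eq]
  refine ⟨g23Rep_y13 ζ b c hb, g23Rep_y221 ζ b c hb hζ3, g23Rep_y1_sq ζ b c, g23Rep_y3_sq ζ b c,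
    g23Rep_bc_y223_y23 ζ b c, ?_⟩
  rw [map_sub, g23Rep_bc_bc_bc_y1_y23_y2_y2 ζ b c hb hζ3, hlam, AlgHom.commutes, sub_self]

theorem statement_18 {k : Type*} [Field k] [IsAlgClosed k] [CharZero k]
    (ζ : k) (hζ : IsPrimitiveRoot ζ 3) (b : k) (hb : b ≠ 0)
    (lam : k)
    (q : Fin 3 → Fin 3 → k) (hq : q = ![![-1, b, -(b ^ 3)⁻¹], ![ζ ^ 2 * b⁻¹, ζ, ζ * b], ![-b ^ 3, b⁻¹, -1]]) :
    (1 : FreeAlgebra k (Fin 3)) ∉ TwoSidedIdeal.span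
      ({(bc q (ygen k 0) (ygen k 2)).1,
        (bc q (ygen k 1) (bc q (ygen k 1) (ygen k 0))).1,
        FreeAlgebra.ι k (0 : Fin 3) ^ 2,
        FreeAlgebra.ι k (2 : Fin 3) ^ 2,
        (bc q (bc q (ygen k 1) (bc q (ygen k 1) (ygen k 2))) (bc q (ygen k 1) (ygen k 2))).1,
        (bc q (bc q (bc q (ygen k 0) (bc q (ygen k 1) (ygen k 2))) (ygen k 1)) (ygen k 1)).1 - algebraMap k (FreeAlgebra k (Fin 3)) lam} : Set (FreeAlgebra k (Fin 3))) :=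
  statement_18_general ζ hζ b hb lam q hq
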